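/- Let m ≥ 1 and let h₁,…,h_m be nonzero integers. Then the Shannon entropy of h₁X₁+⋯+h_mX_m satisfies H(h₁X₁+⋯+h_mX_m) ≥ H_m, i.e., −Σ_{z∈ℤ} p(z)·log₂ p(z) ≥ H_m where p(z) = 2^{-m}·|{(ε₁,…,ε_m) ∈ {0,1}^m : ε₁h₁+⋯+ε_mh_m = z}|; equality holds if and only if |h₁| = |h₂| = ⋯ = |h_m|. -/

import Mathlib

open scoped BigOperators

/-- `H_m`: the Shannon entropy of the symmetric binomial distribution `B(m,1/2)`. -/
noncomputable def Hm (m : ℕ) : ℝ :=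
  -∑ j ∈ Finset.range (m + 1),
    ((m.choose j : ℝ) / 2 ^ m) * Real.logb 2 ((m.choose j : ℝ) / 2 ^ m)

/-- Probability mass function of `h₁X₁+⋯+h_mX_m`, where `X₁,…,X_m` are independent and
uniform on `{0,1}`: `p_X(z) = 2^{-m}·|{ε ∈ {0,1}^m : ε₁h₁+⋯+ε_mh_m = z}|`. -/
noncomputable def pX {m : ℕ} (h : Fin m → ℤ) (z : ℤ) : ℝ :=
  ((Finset.univ.filter fun ε : Fin m → Bool =>
      (∑ i ∈ Finset.univ.filter (fun i => ε i = true), h i) = z).card : ℝ) / 2 ^ m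

/-- Shannon entropy of `h₁X₁+⋯+h_mX_m` (with `0·log₂ 0` interpreted as `0`). -/
noncomputable def entX {m : ℕ} (h : Fin m → ℤ) : ℝ :=
  -∑' z : ℤ, pX h z * Real.logb 2 (pX h z)


/-!
Write `N(s)` for the number of subsets `t` with `∑ i ∈ t, h i = ∑ i ∈ s, h i`. Both entropies have
the form `m - 2⁻ᵐ ∑ₛ log₂ N(s)`, where `N(s) = C(m, #s)` for `H_m` (the entropy of `#s`), so the
claim is `∑ₛ log N(s) ≤ ∑ₛ log C(m, #s)`. Flipping the coordinates where `h` is negative permutes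
the subsets and shifts all sums by a constant, so we may assume `h > 0`. Then every fibre of
`s ↦ ∑ i ∈ s, h i` is an antichain, and the LYM inequality gives `∑ₛ N(s) / C(m, #s) ≤ 2ᵐ`;
`log x ≤ x - 1` turns this into the claim. Equality forces `N(s) = C(m, #s)` for every `s`, but for
`s = {i}` with `h i` minimal the only subsets of sum `h i` are the singletons `{j}` with
`h j = h i`, so all weights are equal.
-/

open Finset Real
open scoped symmDiff

namespace LittlewoodOfford

section Fiber

variable {Ω β : Type*} [Fintype Ω] [DecidableEq β]

def fiberCard (X : Ω → β) (ω : Ω) : ℕ := #{ω' | X ω' = X ω}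

lemma fiberCard_pos (X : Ω → β) (ω : Ω) : 0 < fiberCard X ω :=
  card_pos.2 ⟨ω, by simp⟩

lemma fiberCard_comp_of_injective {γ : Type*} [DecidableEq γ] {g : β → γ} (hg : g.Injective)
    (X : Ω → β) : fiberCard (g ∘ X) = fiberCard X := by
  ext ω
  simp [fiberCard, hg.eq_iff]

lemma fiberCard_comp_equiv {Ω' : Type*} [Fintype Ω'] (X : Ω → β) (σ : Ω' ≃ Ω) (ω : Ω') :
    fiberCard (X ∘ σ) ω = fiberCard X (σ ω) := by
  rw [fiberCard, fiberCard, ← card_map σ.toEmbedding, map_filter, map_univ_equiv]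
  simp

lemma sum_fiberCard_mul (X : Ω → β) (g : Ω → ℝ) :
    ∑ ω, fiberCard X ω * g ω = ∑ ω, ∑ ω' with X ω' = X ω, g ω' := by
  simp_rw [fiberCard, ← nsmul_eq_mul, ← sum_const, sum_filter]
  rw [sum_comm]
  simp_rw [eq_comm]

lemma neg_sum_mul_logb_card_fiber [Nonempty Ω] (X : Ω → β) (b : ℝ) {T : Finset β}
    (hT : ∀ ω, X ω ∈ T) :
    -∑ z ∈ T, (#{ω | X ω = z} / Fintype.card Ω : ℝ) * logb b (#{ω | X ω = z} / Fintype.card Ω) =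
      logb b (Fintype.card Ω) - (∑ ω, logb b (fiberCard X ω)) / Fintype.card Ω := by
  have hΩ : (Fintype.card Ω : ℝ) ≠ 0 := by positivity
  have hfiberwise : ∀ f : ℝ → ℝ,
      ∑ z ∈ T, (#{ω | X ω = z} : ℝ) * f #{ω | X ω = z} = ∑ ω, f (fiberCard X ω) := by
    intro f
    rw [← sum_fiberwise_of_maps_to (fun ω _ => hT ω)]
    refine sum_congr rfl fun z _ => ?_
    rw [← nsmul_eq_mul, ← sum_const]
    refine sum_congr rfl fun ω hω => ?_
    rw [fiberCard, (mem_filter.1 hω).2]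
  calc _ = -(∑ z ∈ T, (#{ω | X ω = z} : ℝ) * logb b (#{ω | X ω = z} / Fintype.card Ω)) /
        Fintype.card Ω := by
        rw [neg_div, sum_div]
        congr 1
        exact sum_congr rfl fun z _ => by ring
    _ = -(∑ ω, (logb b (fiberCard X ω) - logb b (Fintype.card Ω))) / Fintype.card Ω := by
        rw [hfiberwise fun c => logb b (c / Fintype.card Ω)]
        congr 2
        exact sum_congr rfl fun ω _ => logb_div (by exact_mod_cast (fiberCard_pos X ω).ne') hΩ
    _ = _ := by
        rw [sum_sub_distrib, sum_const, card_univ, nsmul_eq_mul]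
        field_simp
        ring

end Fiber

def subsetSum {α β : Type*} [AddCommMonoid β] (w : α → β) (s : Finset α) : β := ∑ i ∈ s, w i

section Signs

variable {α β : Type*} [Fintype α] [DecidableEq α] [AddCommGroup β] [LinearOrder β]
  [IsOrderedAddMonoid β]

lemma subsetSum_abs_symmDiff (w : α → β) (s : Finset α) :
    subsetSum (fun i => |w i|) (s ∆ ({i | w i < 0} : Finset α)) =
      subsetSum w s - subsetSum w {i | w i < 0} := by
  rw [subsetSum, subsetSum, subsetSum, Finset.symmDiff_def, sum_union disjoint_sdiff_sdiff,
    ← sum_sdiff_sub_sum_sdiff, sub_eq_add_neg, ← sum_neg_distrib]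
  congr 1 <;> refine sum_congr rfl fun i hi => ?_
  · exact abs_of_nonneg (by simpa using (mem_sdiff.1 hi).2)
  · exact abs_of_neg (by simpa using (mem_sdiff.1 hi).1)

lemma fiberCard_subsetSum_eq_abs_symmDiff [DecidableEq β] (w : α → β) (s : Finset α) :
    fiberCard (subsetSum w) s =
      fiberCard (subsetSum fun i => |w i|) (s ∆ ({i | w i < 0} : Finset α)) := by
  set t : Finset α := {i | w i < 0}
  have hσ : (subsetSum fun i => |w i|) ∘ (· ∆ t) = (· - subsetSum w t) ∘ subsetSum w :=
    funext (subsetSum_abs_symmDiff w)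
  rw [← fiberCard_comp_of_injective (sub_left_injective (b := subsetSum w t)), ← hσ,
    ← Function.Involutive.coe_toPerm (f := (· ∆ t)) (symmDiff_symmDiff_cancel_right t),
    fiberCard_comp_equiv]
  rfl

lemma sum_fiberCard_subsetSum_abs [DecidableEq β] (w : α → β) (f : ℕ → ℝ) :
    ∑ s, f (fiberCard (subsetSum w) s) = ∑ s, f (fiberCard (subsetSum fun i => |w i|) s) := by
  set t : Finset α := {i | w i < 0}
  simp_rw [fiberCard_subsetSum_eq_abs_symmDiff w]
  exact Equiv.sum_comp (Function.Involutive.toPerm (· ∆ t) (symmDiff_symmDiff_cancel_right t))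
    fun s => f (fiberCard (subsetSum fun i => |w i|) s)

end Signs

lemma card_filter_card_eq {α : Type*} [Fintype α] (j : ℕ) :
    #({t | #t = j} : Finset (Finset α)) = (Fintype.card α).choose j := by
  rw [← powerset_univ, ← powersetCard_eq_filter, card_powersetCard, card_univ]

lemma fiberCard_card {α : Type*} [Fintype α] (s : Finset α) :
    fiberCard card s = (Fintype.card α).choose #s :=
  card_filter_card_eq #s

section Positive

variable {α β : Type*} [Fintype α] [AddCommMonoid β] [LinearOrder β] [IsOrderedCancelAddMonoid β]
  {w : α → β}

omit [Fintype α] in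
lemma subsetSum_strictMono (hw : ∀ i, 0 < w i) : StrictMono (subsetSum w) := fun s t hst => by
  obtain ⟨i, hit, his⟩ := exists_of_ssubset hst
  exact sum_lt_sum_of_subset hst.subset hit his (hw i) fun j _ _ => (hw j).le

lemma isAntichain_subsetSum_fiber (hw : ∀ i, 0 < w i) (z : β) :
    IsAntichain (· ⊆ ·) (SetLike.coe ({s | subsetSum w s = z} : Finset (Finset α))) := by
  intro s hs t ht hne hst
  simp only [coe_filter, Set.mem_ofPred_eq, mem_univ, true_and] at hs ht
  exact (subsetSum_strictMono hw (lt_of_le_of_ne hst hne)).ne (hs.trans ht.symm)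

lemma sum_fiberCard_div_choose_le (hw : ∀ i, 0 < w i) :
    ∑ s, (fiberCard (subsetSum w) s / (Fintype.card α).choose #s : ℝ) ≤
      Fintype.card (Finset α) := by
  simp_rw [div_eq_mul_inv, sum_fiberCard_mul]
  calc _ ≤ ∑ _s : Finset α, (1 : ℝ) :=
        sum_le_sum fun s _ => lubell_yamamoto_meshalkin_inequality_sum_inv_choose
          (isAntichain_subsetSum_fiber hw _)
    _ = _ := by simp

lemma exists_fiberCard_subsetSum_lt_choose [DecidableEq α] (hw : ∀ i, 0 < w i)
    (hne : ∃ i j, w i ≠ w j) : ∃ s, fiberCard (subsetSum w) s < (Fintype.card α).choose #s := by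
  obtain ⟨i, j, hij⟩ := hne
  obtain ⟨i₀, -, hmin⟩ := exists_min_image univ w ⟨i, mem_univ i⟩
  refine ⟨{i₀}, ?_⟩
  have hfiber : ({t | subsetSum w t = subsetSum w {i₀}} : Finset (Finset α)) ⊆
      ({k | w k = w i₀} : Finset α).image singleton := by
    intro t ht
    replace ht : subsetSum w t = w i₀ := by simpa [subsetSum] using ht
    obtain ⟨k, hk⟩ : t.Nonempty := by
      rw [nonempty_iff_ne_empty]
      rintro rfl
      exact (hw i₀).ne (by simpa [subsetSum] using ht)
    have htk : t = {k} := by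
      by_contra htk
      have hkt : {k} ⊂ t := Finset.ssubset_iff_subset_ne.2 ⟨singleton_subset_iff.2 hk, Ne.symm htk⟩
      have := subsetSum_strictMono hw hkt
      simp only [subsetSum, sum_singleton] at this ht
      exact (this.trans_eq ht).not_ge (hmin k (mem_univ k))
    subst htk
    simpa [subsetSum] using ht
  calc fiberCard (subsetSum w) {i₀} ≤ #({k | w k = w i₀} : Finset α) :=
        (card_le_card hfiber).trans card_image_le
    _ < #(univ : Finset α) := by
        refine card_lt_card (filter_ssubset.2 ?_)
        by_cases hi : w i = w i₀
        · exact ⟨j, mem_univ j, fun hj => hij (hi.trans hj.symm)⟩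
        · exact ⟨i, mem_univ i, hi⟩
    _ = (Fintype.card α).choose #{i₀} := by simp

lemma fiberCard_subsetSum_of_forall_eq (hw : ∀ i, 0 < w i) (hconst : ∀ i j, w i = w j)
    (s : Finset α) : fiberCard (subsetSum w) s = (Fintype.card α).choose #s := by
  rcases isEmpty_or_nonempty α with hα | ⟨⟨i₀⟩⟩
  · simp [fiberCard, Subsingleton.elim _ (∅ : Finset α)]
  have hcard : subsetSum w = (· • w i₀) ∘ card := by
    ext t
    simp [subsetSum, hconst _ i₀]
  rw [hcard, fiberCard_comp_of_injective (nsmul_left_strictMono (hw i₀)).injective, fiberCard_card]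

end Positive

lemma sum_log_nonpos_of_sum_le_card {ι : Type*} [Fintype ι] {x : ι → ℝ} (hx : ∀ i, 0 < x i)
    (hsum : ∑ i, x i ≤ Fintype.card ι) : ∑ i, log (x i) ≤ 0 :=
  calc _ ≤ ∑ i, (x i - 1) := sum_le_sum fun i _ => log_le_sub_one_of_pos (hx i)
    _ ≤ 0 := by simpa [sum_sub_distrib] using hsum

lemma sum_log_neg_of_sum_le_card {ι : Type*} [Fintype ι] {x : ι → ℝ} (hx : ∀ i, 0 < x i)
    (hsum : ∑ i, x i ≤ Fintype.card ι) (hne : ∃ i, x i ≠ 1) : ∑ i, log (x i) < 0 := by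
  obtain ⟨i, hi⟩ := hne
  calc _ < ∑ i, (x i - 1) := sum_lt_sum (fun i _ => log_le_sub_one_of_pos (hx i))
          ⟨i, mem_univ i, log_lt_sub_one_of_pos (hx i) hi⟩
    _ ≤ 0 := by simpa [sum_sub_distrib] using hsum

section LogSum

variable {α β : Type*} [Fintype α]

lemma fiberCard_div_choose_pos [DecidableEq β] (X : Finset α → β) (s : Finset α) :
    (0 : ℝ) < fiberCard X s / (Fintype.card α).choose #s := by
  have := fiberCard_pos X s
  have := Nat.choose_pos (card_le_univ s)
  positivity

lemma sum_log_fiberCard_sub_sum_log_choose [DecidableEq β] (X : Finset α → β) :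
    ∑ s, log (fiberCard X s) - ∑ s : Finset α, log ((Fintype.card α).choose #s) =
      ∑ s, log (fiberCard X s / (Fintype.card α).choose #s : ℝ) := by
  rw [← sum_sub_distrib]
  refine sum_congr rfl fun s _ => (log_div ?_ ?_).symm
  · exact_mod_cast (fiberCard_pos X s).ne'
  · exact_mod_cast (Nat.choose_pos (card_le_univ s)).ne'

variable [AddCommMonoid β] [LinearOrder β] [IsOrderedCancelAddMonoid β] {w : α → β}

lemma sum_log_fiberCard_le_sum_log_choose (hw : ∀ i, 0 < w i) :
    ∑ s, log (fiberCard (subsetSum w) s) ≤ ∑ s : Finset α, log ((Fintype.card α).choose #s) := by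
  rw [← sub_nonpos, sum_log_fiberCard_sub_sum_log_choose]
  exact sum_log_nonpos_of_sum_le_card (fiberCard_div_choose_pos _) (sum_fiberCard_div_choose_le hw)

lemma sum_log_fiberCard_eq_sum_log_choose_iff [DecidableEq α] (hw : ∀ i, 0 < w i) :
    ∑ s, log (fiberCard (subsetSum w) s) = ∑ s : Finset α, log ((Fintype.card α).choose #s) ↔
      ∀ i j, w i = w j := by
  refine ⟨fun heq => ?_, fun hconst => by simp_rw [fiberCard_subsetSum_of_forall_eq hw hconst]⟩
  by_contra hne
  push Not at hne
  obtain ⟨s, hs⟩ := exists_fiberCard_subsetSum_lt_choose hw hne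
  have hlt := sum_log_neg_of_sum_le_card (fiberCard_div_choose_pos _)
    (sum_fiberCard_div_choose_le hw) ⟨s, ?_⟩
  · rw [← sum_log_fiberCard_sub_sum_log_choose, heq, sub_self] at hlt
    exact hlt.false
  · rw [Ne, div_eq_one_iff_eq (by exact_mod_cast (Nat.choose_pos (card_le_univ s)).ne')]
    exact_mod_cast hs.ne

end LogSum

def finsetEquivBoolFun (α : Type*) [Fintype α] [DecidableEq α] : Finset α ≃ (α → Bool) where
  toFun s i := decide (i ∈ s)
  invFun ε := {i | ε i = true}
  left_inv s := by ext; simp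
  right_inv ε := by ext; simp

lemma logb_two_pow_sub_sum_logb_div {ι : Type*} [Fintype ι] (m : ℕ) (f : ι → ℝ) :
    logb 2 (2 ^ m) - (∑ i, logb 2 (f i)) / 2 ^ m = m - (∑ i, log (f i)) / (2 ^ m * log 2) := by
  simp only [logb, ← sum_div]
  rw [log_pow, div_div]
  field_simp

lemma entX_eq_sub_sum_log_fiberCard {m : ℕ} (h : Fin m → ℤ) :
    entX h = m - (∑ s, log (fiberCard (subsetSum h) s)) / (2 ^ m * log 2) := by
  let X : (Fin m → Bool) → ℤ := fun ε => ∑ i ∈ univ.filter (fun i => ε i = true), h i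
  have hX : X ∘ finsetEquivBoolFun (Fin m) = subsetSum h := by
    ext s
    simp [X, subsetSum, finsetEquivBoolFun]
  have hpX : pX h = fun z => (#{ε | X ε = z} / Fintype.card (Fin m → Bool) : ℝ) := by
    ext z
    simp [pX, X]
  rw [entX, tsum_eq_sum (s := univ.image X), hpX, neg_sum_mul_logb_card_fiber X 2 ?_]
  · rw [← hX, ← Equiv.sum_comp (finsetEquivBoolFun (Fin m))]
    simp only [fiberCard_comp_equiv, Fintype.card_fun, Fintype.card_bool, Fintype.card_fin]
    push_cast
    exact logb_two_pow_sub_sum_logb_div m _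
  · exact fun ε => mem_image_of_mem X (mem_univ ε)
  · intro z hz
    have hempty : ({ε | X ε = z} : Finset (Fin m → Bool)) = ∅ :=
      filter_eq_empty_iff.2 fun ε _ hε => hz (hε ▸ mem_image_of_mem X (mem_univ ε))
    simp [hpX, hempty]

lemma Hm_eq_sub_sum_log_choose (m : ℕ) :
    Hm m = m - (∑ s : Finset (Fin m), log (m.choose #s)) / (2 ^ m * log 2) := by
  have hentropy := neg_sum_mul_logb_card_fiber (Ω := Finset (Fin m)) card 2 (T := range (m + 1))
    fun s => mem_range_succ_iff.2 (by simpa using card_le_univ s)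
  simp only [card_filter_card_eq, fiberCard_card, Fintype.card_finset, Fintype.card_fin]
    at hentropy
  push_cast at hentropy
  rw [Hm, hentropy]
  exact logb_two_pow_sub_sum_logb_div m _

end LittlewoodOfford

open LittlewoodOfford

theorem entropy_littlewood_offord_general (m : ℕ)
    (h : Fin m → ℤ) (hh : ∀ i, h i ≠ 0) :
    Hm m ≤ entX h ∧ (entX h = Hm m ↔ ∀ i j, |h i| = |h j|) := by
  have hw : ∀ i, 0 < |h i| := fun i => abs_pos.2 (hh i)
  have hle := sum_log_fiberCard_le_sum_log_choose hw
  have hc : (0 : ℝ) < 2 ^ m * log 2 := by positivity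
  rw [entX_eq_sub_sum_log_fiberCard, Hm_eq_sub_sum_log_choose,
    sum_fiberCard_subsetSum_abs h fun n => log n]
  simp only [Fintype.card_fin] at hle ⊢
  refine ⟨by gcongr, ?_⟩
  rw [sub_right_inj, div_left_inj' hc.ne']
  simpa using sum_log_fiberCard_eq_sum_log_choose_iff hw

theorem entropy_littlewood_offord (m : ℕ) (hm : 1 ≤ m)
    (h : Fin m → ℤ) (hh : ∀ i, h i ≠ 0) :
    Hm m ≤ entX h ∧ (entX h = Hm m ↔ ∀ i j, |h i| = |h j|) :=
  entropy_littlewood_offord_general m h hh
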